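/- Let 0 < r1 < r2, M₃ > 0 and g, q, z_d ∈ ℝ. For b ∈ ℝ define u_b(r) = g·(r1²/3)·( 1/2 - (1/2)·(r/r1)² + (r2/r1)³ - (r2/r)·(r2/r1)² ) + q·(r2²/r1)·( r1/r - 1 ) + b and the cost J₃(b) = 2π·∫_{r1}^{r2} r²·(u_b(r) - z_d)² dr + 2π·M₃·r1²·b². Then J₃ attains its minimum over ℝ at the unique point b_op = -( G₅·g·r1² + G₆·q·(r2²/r1) - 2·G₃·z_d ) / ( 2·(G₃ + M₃/r1) ), where G₃ = (1/3)·( (r2/r1)³ - 1 ), G₅ = -2/45 + (2/9)·(r2/r1)³ - (2/5)·(r2/r1)⁵ + (2/9)·(r2/r1)⁶, and G₆ = -1/3 + (r2/r1)² - (2/3)·(r2/r1)³. -/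

import Mathlib

/-!
As a function of `b`, `J₃` is a quadratic polynomial: writing `w = u₀ - z_d`,
`J₃ b = 2π (∫ r² + M₃ r₁²) b² + 4π (∫ r² w) b + 2π ∫ r² w²`,
with positive leading coefficient, so its unique minimiser is the vertex
`-(∫ r² w) / (∫ r² + M₃ r₁²)`. Only the first moment `∫ r² w` has to be computed,
and it is elementary because `r² u₀(r)` is a polynomial in `r`. The constants of
the statement come from `∫ r² w = (r₁³ / 2) (G₅ g r₁² + G₆ q r₂² / r₁ - 2 G₃ z_d)`
and `∫ r² = r₁³ G₃`.
-/

open Real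

/-- The state `u₀`; the state for the inner temperature `b` is `u₀ + b`. -/
noncomputable def shellState (r1 r2 g q r : ℝ) : ℝ :=
  g * (r1 ^ 2 / 3) * (1 / 2 - (1 / 2) * (r / r1) ^ 2 + (r2 / r1) ^ 3 - (r2 / r) * (r2 / r1) ^ 2)
    + q * (r2 ^ 2 / r1) * (r1 / r - 1)

theorem ne_zero_of_mem_uIcc_of_pos {a b x : ℝ} (ha : 0 < a) (hb : 0 < b)
    (hx : x ∈ Set.uIcc a b) : x ≠ 0 :=
  (lt_of_lt_of_le (lt_min ha hb) hx.1).ne'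

theorem intervalIntegral.integral_mul_add_const_sq {ρ f : ℝ → ℝ} {a b : ℝ}
    (hρ : IntervalIntegrable ρ MeasureTheory.volume a b)
    (hρf : IntervalIntegrable (fun x => ρ x * f x) MeasureTheory.volume a b)
    (hρf2 : IntervalIntegrable (fun x => ρ x * f x ^ 2) MeasureTheory.volume a b) (c : ℝ) :
    ∫ x in a..b, ρ x * (f x + c) ^ 2 =
      (∫ x in a..b, ρ x * f x ^ 2) + 2 * c * (∫ x in a..b, ρ x * f x)
        + c ^ 2 * ∫ x in a..b, ρ x := by
  have expand : (fun x => ρ x * (f x + c) ^ 2) =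
      fun x => (ρ x * f x ^ 2 + (2 * c) * (ρ x * f x)) + c ^ 2 * ρ x := by
    funext x
    ring
  rw [expand, intervalIntegral.integral_add (hρf2.add (hρf.const_mul _)) (hρ.const_mul _),
    intervalIntegral.integral_add hρf2 (hρf.const_mul _), intervalIntegral.integral_const_mul,
    intervalIntegral.integral_const_mul]

theorem quadratic_vertex_strict_min {J : ℝ → ℝ} {K L E : ℝ} (hK : 0 < K)
    (hJ : ∀ x, J x = K * x ^ 2 + 2 * L * x + E) :
    (∀ x, J (-L / K) ≤ J x) ∧ ∀ x, x ≠ -L / K → J (-L / K) < J x := by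
  have vertex : ∀ x, J x = J (-L / K) + K * (x - -L / K) ^ 2 := by
    intro x
    rw [hJ, hJ]
    field_simp
    ring
  refine ⟨fun x => ?_, fun x hx => ?_⟩
  · rw [vertex x]
    have := mul_nonneg hK.le (sq_nonneg (x - -L / K))
    linarith
  · rw [vertex x]
    have := mul_pos hK (pow_two_pos_of_ne_zero (sub_ne_zero.mpr hx))
    linarith

theorem continuousOn_shellState {r1 r2 g q : ℝ} {s : Set ℝ} (hs : ∀ r ∈ s, r ≠ 0) :
    ContinuousOn (shellState r1 r2 g q) s := by
  unfold shellState
  fun_prop (disch := assumption)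

theorem integral_sq_mul_shellState_sub {r1 r2 : ℝ} (hr1 : 0 < r1) (hr2 : 0 < r2) (g q zd : ℝ) :
    ∫ r in r1..r2, r ^ 2 * (shellState r1 r2 g q r - zd) =
      (g * (r1 ^ 2 / 3) * (1 / 2 + (r2 / r1) ^ 3) - q * (r2 ^ 2 / r1) - zd)
          * ((r2 ^ 3 - r1 ^ 3) / 3)
        - g / 6 * ((r2 ^ 5 - r1 ^ 5) / 5)
        + (q * r2 ^ 2 - g * r2 ^ 3 / 3) * ((r2 ^ 2 - r1 ^ 2) / 2) := by
  set a := g * (r1 ^ 2 / 3) * (1 / 2 + (r2 / r1) ^ 3) - q * (r2 ^ 2 / r1) - zd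
  have polynomial : Set.EqOn (fun r => r ^ 2 * (shellState r1 r2 g q r - zd))
      (fun r => a * r ^ 2 - g / 6 * r ^ 4 + (q * r2 ^ 2 - g * r2 ^ 3 / 3) * r)
      (Set.uIcc r1 r2) := by
    intro r hr
    have := ne_zero_of_mem_uIcc_of_pos hr1 hr2 hr
    simp only [shellState, a]
    field_simp
    ring
  have hint : ∀ f : ℝ → ℝ, Continuous f →
      IntervalIntegrable f MeasureTheory.volume r1 r2 :=
    fun f hf => hf.intervalIntegrable _ _
  rw [intervalIntegral.integral_congr polynomial,
    intervalIntegral.integral_add (hint _ (by fun_prop)) (hint _ (by fun_prop)),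
    intervalIntegral.integral_sub (hint _ (by fun_prop)) (hint _ (by fun_prop))]
  simp only [intervalIntegral.integral_const_mul, integral_pow]
  rw [intervalIntegral.integral_const_mul, integral_id]
  ring

/-- Boundary optimal control on the constant temperature `b` on the inner sphere
of the spherical shell: `J₃` attains its minimum over ℝ at the unique point
`b_op`. -/
theorem stmt_19 (r1 r2 M3 g q zd : ℝ) (hr1 : 0 < r1) (hr12 : r1 < r2) (hM3 : 0 < M3)
    (J3 : ℝ → ℝ) (bop G3 G5 G6 : ℝ)
    (hJ3 : J3 = fun b =>
      2 * π * (∫ r in r1..r2, r ^ 2 *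
        ((g * (r1 ^ 2 / 3) * (1 / 2 - (1 / 2) * (r / r1) ^ 2 + (r2 / r1) ^ 3
            - (r2 / r) * (r2 / r1) ^ 2)
          + q * (r2 ^ 2 / r1) * (r1 / r - 1) + b) - zd) ^ 2)
      + 2 * π * M3 * r1 ^ 2 * b ^ 2)
    (hG3 : G3 = (1 / 3) * ((r2 / r1) ^ 3 - 1))
    (hG5 : G5 = -(2 / 45) + (2 / 9) * (r2 / r1) ^ 3 - (2 / 5) * (r2 / r1) ^ 5
      + (2 / 9) * (r2 / r1) ^ 6)
    (hG6 : G6 = -(1 / 3) + (r2 / r1) ^ 2 - (2 / 3) * (r2 / r1) ^ 3)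
    (hbop : bop = -(G5 * g * r1 ^ 2 + G6 * q * (r2 ^ 2 / r1) - 2 * G3 * zd) /
      (2 * (G3 + M3 / r1))) :
    (∀ b : ℝ, J3 bop ≤ J3 b) ∧ ∀ b : ℝ, b ≠ bop → J3 bop < J3 b := by
  have hr2 : 0 < r2 := hr1.trans hr12
  set w : ℝ → ℝ := fun r => shellState r1 r2 g q r - zd
  have hw : ContinuousOn w (Set.uIcc r1 r2) :=
    (continuousOn_shellState fun _ => ne_zero_of_mem_uIcc_of_pos hr1 hr2).sub continuousOn_const
  have hC : 0 < (r2 ^ 3 - r1 ^ 3) / 3 + M3 * r1 ^ 2 := by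
    have : r1 ^ 3 ≤ r2 ^ 3 := pow_le_pow_left₀ hr1.le hr12.le 3
    positivity
  set K := 2 * π * ((r2 ^ 3 - r1 ^ 3) / 3 + M3 * r1 ^ 2) with hK
  set L := 2 * π * ∫ r in r1..r2, r ^ 2 * w r with hL
  have quadratic : ∀ b,
      J3 b = K * b ^ 2 + 2 * L * b + 2 * π * ∫ r in r1..r2, r ^ 2 * w r ^ 2 := by
    intro b
    have : J3 b =
        2 * π * (∫ r in r1..r2, r ^ 2 * (w r + b) ^ 2) + 2 * π * M3 * r1 ^ 2 * b ^ 2 := by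
      simp only [hJ3, w, shellState, add_sub_right_comm _ b zd]
    rw [this, intervalIntegral.integral_mul_add_const_sq
      ((continuous_pow 2).intervalIntegrable _ _) ((continuousOn_pow 2).mul hw).intervalIntegrable
      ((continuousOn_pow 2).mul (hw.pow 2)).intervalIntegrable, integral_pow]
    ring
  have vertex : bop = -L / K := by
    have := hC.ne'
    simp only [hbop, hK, hL, w, integral_sq_mul_shellState_sub hr1 hr2, hG3, hG5, hG6]
    field_simp
    ring
  rw [vertex]
  exact quadratic_vertex_strict_min (mul_pos (by positivity) hC) quadratic
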